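/- For Z ~ Beta(1/2,(n−2)/2), n > 3, and 0 < ε < 1/2, setting M₁ = (ε/(ε+1))², the probability P(Z < M₁/n) is bounded above by √(M₁)/(1 − √(M₁)), which equals ε. -/

import Mathlib

open MeasureTheory Real

/-- The Beta function `B(a,b) = Γ(a)Γ(b)/Γ(a+b)`. -/
noncomputable def betaFun (a b : ℝ) : ℝ := Real.Gamma a * Real.Gamma b / Real.Gamma (a + b)

/-- The density of the Beta(a,b) distribution on `[0,1]`. -/
noncomputable def betaPDF (a b x : ℝ) : ℝ :=
  if x ∈ Set.Icc (0 : ℝ) 1 then x ^ (a - 1) * (1 - x) ^ (b - 1) / betaFun a b else 0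

/-!
Since `b ≥ 1`, the factor `(1 - x)^(b - 1)` of the Beta density is at most `1`, so
`P(Z < z) ≤ z^a / (a B(a, b))`. For `a = 1/2`, log-convexity of `Γ` (Gautschi's inequality
`Γ(b + 1/2) ≤ Γ(b) √b`) gives `B(1/2, b) ≥ √(π / b)`, hence `P(Z < z) ≤ 2 √(z b / π)`.
With `z = M₁/n` and `b = (n-2)/2` we have `z b < M₁ / 2`, and `2 < π` gives `P(Z < z) < √M₁`,
which is below `√M₁ / (1 - √M₁) = ε`.
-/

lemma Real.Gamma_add_half_le_mul_sqrt {s : ℝ} (hs : 0 < s) :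
    Gamma (s + 1 / 2) ≤ Gamma s * √s := by
  have hΓ : 0 ≤ Gamma s := (Gamma_pos_of_pos hs).le
  calc Gamma (s + 1 / 2) = Gamma ((1 / 2) * s + (1 / 2) * (s + 1)) := by ring_nf
    _ ≤ Gamma s ^ (1 / 2 : ℝ) * Gamma (s + 1) ^ (1 / 2 : ℝ) :=
      Gamma_mul_add_mul_le_rpow_Gamma_mul_rpow_Gamma hs (by linarith) (by norm_num)
        (by norm_num) (by norm_num)
    _ = Gamma s * √s := by
      rw [Gamma_add_one hs.ne', mul_rpow hs.le hΓ, ← sqrt_eq_rpow, ← sqrt_eq_rpow,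
        mul_left_comm, mul_self_sqrt hΓ, mul_comm]

lemma betaFun_pos {a b : ℝ} (ha : 0 < a) (hb : 0 < b) : 0 < betaFun a b := by
  unfold betaFun
  have := Gamma_pos_of_pos ha
  have := Gamma_pos_of_pos hb
  have := Gamma_pos_of_pos (add_pos ha hb)
  positivity

lemma sqrt_pi_div_sqrt_le_betaFun_half {b : ℝ} (hb : 0 < b) :
    √π / √b ≤ betaFun (1 / 2) b := by
  have hΓb : 0 < Gamma (b + 1 / 2) := Gamma_pos_of_pos (by linarith)
  rw [betaFun, Gamma_one_half_eq, add_comm, div_le_div_iff₀ (sqrt_pos.2 hb) hΓb, mul_assoc]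
  exact mul_le_mul_of_nonneg_left (Gamma_add_half_le_mul_sqrt hb) (sqrt_nonneg π)

lemma betaPDF_nonneg {a b : ℝ} (ha : 0 < a) (hb : 0 < b) (x : ℝ) : 0 ≤ betaPDF a b x := by
  have hB := betaFun_pos ha hb
  unfold betaPDF
  split_ifs with hx
  · have := rpow_nonneg hx.1 (a - 1)
    have := rpow_nonneg (sub_nonneg.2 hx.2) (b - 1)
    positivity
  · exact le_rfl

lemma betaPDF_le_rpow {a b x : ℝ} (ha : 0 < a) (hb : 1 ≤ b) (hx : 0 ≤ x) :
    betaPDF a b x ≤ x ^ (a - 1) / betaFun a b := by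
  have hB := betaFun_pos ha (by linarith : 0 < b)
  unfold betaPDF
  split_ifs with hx1
  · gcongr
    calc x ^ (a - 1) * (1 - x) ^ (b - 1) ≤ x ^ (a - 1) * 1 := by
          gcongr
          exact rpow_le_one (by linarith [hx1.2]) (by linarith [hx1.1]) (by linarith)
      _ = x ^ (a - 1) := mul_one _
  · exact div_nonneg (rpow_nonneg hx _) hB.le

lemma integral_Iio_betaPDF_le {a b z : ℝ} (ha : 0 < a) (hb : 1 ≤ b) (hz : 0 ≤ z) :
    ∫ x in Set.Iio z, betaPDF a b x ≤ z ^ a / (a * betaFun a b) := by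
  have hvanish : ∀ x ∈ Set.Iio z \ Set.Ico 0 z, betaPDF a b x = 0 := by
    rintro x ⟨hxz, hx⟩
    have hx0 : x < 0 := by
      by_contra h
      exact hx ⟨not_lt.1 h, hxz⟩
    simp [betaPDF, hx0]
  have hint : IntegrableOn (fun x : ℝ => x ^ (a - 1)) (Set.Ico 0 z) := by
    rw [← intervalIntegrable_iff_integrableOn_Ico_of_le hz]
    exact intervalIntegral.intervalIntegrable_rpow' (by linarith)
  calc ∫ x in Set.Iio z, betaPDF a b x = ∫ x in Set.Ico 0 z, betaPDF a b x :=
        setIntegral_eq_of_subset_of_forall_sdiff_eq_zero measurableSet_Iio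
          Set.Ico_subset_Iio_self hvanish
    _ ≤ ∫ x in Set.Ico 0 z, x ^ (a - 1) / betaFun a b := by
        refine integral_mono_of_nonneg (ae_of_all _ (betaPDF_nonneg ha (by linarith)))
          (hint.div_const _) (ae_restrict_of_forall_mem measurableSet_Ico fun x hx => ?_)
        exact betaPDF_le_rpow ha hb hx.1
    _ = z ^ a / (a * betaFun a b) := by
        rw [integral_div, integral_Ico_eq_integral_Ioo, ← integral_Ioc_eq_integral_Ioo,
          ← intervalIntegral.integral_of_le hz, integral_rpow (Or.inl (by linarith)),
          sub_add_cancel, zero_rpow ha.ne', sub_zero, div_div]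

lemma integral_Iio_betaPDF_half_le {b z : ℝ} (hb : 1 ≤ b) (hz : 0 ≤ z) :
    ∫ x in Set.Iio z, betaPDF (1 / 2) b x ≤ 2 * √(z * b / π) := by
  have hb0 : 0 < b := by linarith
  have hB := betaFun_pos one_half_pos hb0
  calc ∫ x in Set.Iio z, betaPDF (1 / 2) b x ≤ z ^ (1 / 2 : ℝ) / (1 / 2 * betaFun (1 / 2) b) :=
        integral_Iio_betaPDF_le one_half_pos hb hz
    _ = 2 * √z / betaFun (1 / 2) b := by rw [← sqrt_eq_rpow]; field_simp
    _ ≤ 2 * √z / (√π / √b) := by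
        gcongr
        exact sqrt_pi_div_sqrt_le_betaFun_half hb0
    _ = 2 * √(z * b / π) := by
        rw [sqrt_div' _ pi_pos.le, sqrt_mul hz]
        field_simp

lemma two_mul_sqrt_div_mul_half_sub_two_div_pi_lt {M m : ℝ} (hM : 0 < M) (hm : 2 < m) :
    2 * √(M / m * ((m - 2) / 2) / π) < √M := by
  have hm0 : 0 < m := by linarith
  have hfrac : (m - 2) / m < 1 := (div_lt_one hm0).2 (by linarith)
  rw [lt_sqrt (by positivity), mul_pow, sq_sqrt (by positivity), ← mul_div_assoc,
    div_lt_iff₀ pi_pos]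
  calc 2 ^ 2 * (M / m * ((m - 2) / 2)) = 2 * M * ((m - 2) / m) := by field_simp
    _ < 2 * M := mul_lt_of_lt_one_right (by positivity) hfrac
    _ < M * π := by nlinarith [pi_gt_three]

theorem beta_lower_tail_bound_general (n : ℕ) (hn : 3 < n) (ε : ℝ) (hε0 : 0 < ε)
    (M₁ : ℝ) (hM₁ : M₁ = (ε / (ε + 1)) ^ 2) :
    (∫ x in Set.Iio (M₁ / n), betaPDF (1 / 2) (((n : ℝ) - 2) / 2) x) <
      Real.sqrt M₁ / (1 - Real.sqrt M₁) ∧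
    Real.sqrt M₁ / (1 - Real.sqrt M₁) = ε := by
  have hn4 : (4 : ℝ) ≤ n := by exact_mod_cast hn
  have hM₁_pos : 0 < M₁ := by rw [hM₁]; positivity
  have hsqrt : √M₁ = ε / (ε + 1) := by rw [hM₁]; exact sqrt_sq (by positivity)
  have hratio : √M₁ / (1 - √M₁) = ε := by
    rw [hsqrt, one_sub_div (by positivity), add_sub_cancel_left, div_div_div_cancel_right₀
      (by positivity), div_one]
  refine ⟨?_, hratio⟩
  calc ∫ x in Set.Iio (M₁ / n), betaPDF (1 / 2) (((n : ℝ) - 2) / 2) x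
      ≤ 2 * √(M₁ / n * ((n - 2) / 2) / π) :=
        integral_Iio_betaPDF_half_le (by linarith) (by positivity)
    _ < √M₁ := two_mul_sqrt_div_mul_half_sub_two_div_pi_lt hM₁_pos (by linarith)
    _ < √M₁ / (1 - √M₁) := by
        rw [hratio, hsqrt, div_lt_iff₀ (by positivity)]
        nlinarith

/-- For `Z ~ Beta(1/2, (n−2)/2)`, `n > 3`, `0 < ε < 1/2`, with `M₁ = (ε/(ε+1))²`:
`P(Z < M₁/n) < √M₁/(1 − √M₁)`, and `√M₁/(1 − √M₁) = ε`. -/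
theorem beta_lower_tail_bound (n : ℕ) (hn : 3 < n) (ε : ℝ) (hε0 : 0 < ε)
    (hε2 : ε < 1 / 2) (M₁ : ℝ) (hM₁ : M₁ = (ε / (ε + 1)) ^ 2) :
    (∫ x in Set.Iio (M₁ / n), betaPDF (1 / 2) (((n : ℝ) - 2) / 2) x) <
      Real.sqrt M₁ / (1 - Real.sqrt M₁) ∧
    Real.sqrt M₁ / (1 - Real.sqrt M₁) = ε :=
  beta_lower_tail_bound_general n hn ε hε0 M₁ hM₁
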